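/- arXiv:2410.16142 — 2 statements merged into one kernel-verified Lean document; each statement's English description precedes it below -/
import Mathlib

section
/- Let D be an integral domain with quotient field K, E ⊆ K nonempty, and I a nonzero fractional ideal of D. Then (I·Int^R(E,D))⁻¹ = Int^R(E, I⁻¹) := {φ ∈ K(X) : φ(E) ⊆ I⁻¹}, and consequently (I·Int^R(E,D))_v = Int^R(E, I_v). -/
open Polynomial

variable {K : Type*} [Field K]

/-- Evaluation of a rational function at a point of `K`. -/
noncomputable def rfEval (e : K) (φ : RatFunc K) : K :=
  RatFunc.eval (RingHom.id K) e φ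

/-- `φ` is defined at every point of `E` (its reduced denominator does not vanish)
and maps `E` into `T`. -/
def MapsInto (E T : Set K) (φ : RatFunc K) : Prop :=
  ∀ e ∈ E, Polynomial.eval e φ.denom ≠ 0 ∧ rfEval e φ ∈ T

theorem eval₂_id_eq_eval (e : K) (p : K[X]) :
    p.eval₂ (RingHom.id K) e = p.eval e := by rfl

theorem denom_eval_ne_zero_of_dvd {x y z : RatFunc K} (h : z.denom ∣ x.denom * y.denom)
    {e : K} (hx : Polynomial.eval e x.denom ≠ 0) (hy : Polynomial.eval e y.denom ≠ 0) :
    Polynomial.eval e z.denom ≠ 0 := by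
  obtain ⟨c, hc⟩ := h
  intro h0
  apply mul_ne_zero hx hy
  have : Polynomial.eval e (x.denom * y.denom) = Polynomial.eval e z.denom * Polynomial.eval e c := by
    rw [hc, Polynomial.eval_mul]
  rw [Polynomial.eval_mul] at this
  rw [this, h0, zero_mul]

theorem rfEval_add {x y : RatFunc K} {e : K} (hx : Polynomial.eval e x.denom ≠ 0)
    (hy : Polynomial.eval e y.denom ≠ 0) : rfEval e (x + y) = rfEval e x + rfEval e y := by
  apply RatFunc.eval_add <;> rw [eval₂_id_eq_eval] <;> assumption

theorem rfEval_mul {x y : RatFunc K} {e : K} (hx : Polynomial.eval e x.denom ≠ 0)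
    (hy : Polynomial.eval e y.denom ≠ 0) : rfEval e (x * y) = rfEval e x * rfEval e y := by
  apply RatFunc.eval_mul <;> rw [eval₂_id_eq_eval] <;> assumption

theorem denom_const (c : K) : (algebraMap K (RatFunc K) c).denom = 1 := by
  have : algebraMap K (RatFunc K) c = algebraMap K[X] (RatFunc K) (Polynomial.C c) := by
    rw [RatFunc.algebraMap_C]; rfl
  rw [this, RatFunc.denom_algebraMap]

theorem rfEval_const (e c : K) : rfEval e (algebraMap K (RatFunc K) c) = c := by
  have : algebraMap K (RatFunc K) c = RatFunc.C c := rfl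
  rw [rfEval, this, RatFunc.eval_C]; rfl

/-- The ring of `D`-valued rational functions on `E`:
`Int^R(E,D) = {φ ∈ K(X) : φ(E) ⊆ D}`. -/
def IntR (E : Set K) (D : Subring K) : Subring (RatFunc K) where
  carrier := {φ | MapsInto E (D : Set K) φ}
  zero_mem' := by
    intro e _
    constructor
    · rw [RatFunc.denom_zero]; simp
    · have : rfEval e (0 : RatFunc K) = 0 := by rw [rfEval, RatFunc.eval_zero]
      rw [this]; exact D.zero_mem
  one_mem' := by
    intro e _
    constructor
    · rw [RatFunc.denom_one]; simp
    · have : rfEval e (1 : RatFunc K) = 1 := by rw [rfEval, RatFunc.eval_one]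
      rw [this]; exact D.one_mem
  add_mem' := by
    intro x y hx hy e he
    obtain ⟨hxd, hxv⟩ := hx e he
    obtain ⟨hyd, hyv⟩ := hy e he
    refine ⟨denom_eval_ne_zero_of_dvd (RatFunc.denom_add_dvd x y) hxd hyd, ?_⟩
    rw [rfEval_add hxd hyd]; exact D.add_mem hxv hyv
  mul_mem' := by
    intro x y hx hy e he
    obtain ⟨hxd, hxv⟩ := hx e he
    obtain ⟨hyd, hyv⟩ := hy e he
    refine ⟨denom_eval_ne_zero_of_dvd (RatFunc.denom_mul_dvd x y) hxd hyd, ?_⟩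
    rw [rfEval_mul hxd hyd]; exact D.mul_mem hxv hyv
  neg_mem' := by
    intro x hx e he
    obtain ⟨hxd, hxv⟩ := hx e he
    have hconst : Polynomial.eval e (algebraMap K (RatFunc K) (-1 : K)).denom ≠ 0 := by
      rw [denom_const]; simp
    have hneg : -x = algebraMap K (RatFunc K) (-1 : K) * x := by
      rw [map_neg, map_one, neg_one_mul]
    constructor
    · rw [hneg]
      exact denom_eval_ne_zero_of_dvd (RatFunc.denom_mul_dvd _ x)
        (by rw [denom_const]; simp) hxd
    · rw [hneg, rfEval_mul hconst hxd, rfEval_const]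
      rw [neg_one_mul]
      exact D.neg_mem hxv

theorem mem_IntR_iff {E : Set K} {D : Subring K} {φ : RatFunc K} :
    φ ∈ IntR E D ↔ MapsInto E (D : Set K) φ := Iff.rfl

theorem const_mem_IntR {E : Set K} {D : Subring K} {d : K} (hd : d ∈ D) :
    algebraMap K (RatFunc K) d ∈ IntR E D := by
  intro e _
  refine ⟨by rw [denom_const]; simp, ?_⟩
  rw [rfEval_const]; exact hd

/-- The canonical map `D → Int^R(E,D)` sending `d` to the constant rational function `d`. -/
noncomputable def constHom (E : Set K) (D : Subring K) : D →+* IntR E D where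
  toFun d := ⟨algebraMap K (RatFunc K) (d : K), const_mem_IntR d.2⟩
  map_one' := by ext; simp
  map_mul' x y := by ext; simp
  map_zero' := by ext; simp
  map_add' x y := by ext; simp

/-- Evaluation at a point `a ∈ E`, as a ring homomorphism `Int^R(E,D) → D`. -/
noncomputable def evalHom (E : Set K) (D : Subring K) (a : K) (ha : a ∈ E) :
    IntR E D →+* D where
  toFun φ := ⟨rfEval a φ.1, (φ.2 a ha).2⟩
  map_one' := by
    ext
    show rfEval a (1 : RatFunc K) = 1
    rw [rfEval, RatFunc.eval_one]
  map_mul' x y := by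
    ext
    exact rfEval_mul (x.2 a ha).1 (y.2 a ha).1
  map_zero' := by
    ext
    show rfEval a (0 : RatFunc K) = 0
    rw [rfEval, RatFunc.eval_zero]
  map_add' x y := by
    ext
    exact rfEval_add (x.2 a ha).1 (y.2 a ha).1

/-- `K` is the quotient field of `D`. -/
def IsQuotField (D : Subring K) : Prop :=
  ∀ x : K, ∃ a ∈ D, ∃ b ∈ D, b ≠ 0 ∧ x = a / b
/-- The localization `S⁻¹A` of a subring `A` of a field at a multiplicative submonoid
`S` of `A` not containing `0`, realized as a subring of the ambient field. -/
def locSubring {F : Type*} [Field F] (A : Subring F) (S : Submonoid A)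
    (hS : ∀ s ∈ S, s ≠ (0 : A)) : Subring F where
  carrier := {x | ∃ a : A, ∃ s ∈ S, x = (a : F) / (s : F)}
  zero_mem' := ⟨0, 1, S.one_mem, by simp⟩
  one_mem' := ⟨1, 1, S.one_mem, by simp⟩
  add_mem' := by
    rintro x y ⟨a, s, hs, rfl⟩ ⟨b, t, ht, rfl⟩
    refine ⟨a * t + b * s, s * t, S.mul_mem hs ht, ?_⟩
    have hs0 : (s : F) ≠ 0 := fun h => hS s hs (Subtype.ext h)
    have ht0 : (t : F) ≠ 0 := fun h => hS t ht (Subtype.ext h)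
    push_cast
    field_simp
  mul_mem' := by
    rintro x y ⟨a, s, hs, rfl⟩ ⟨b, t, ht, rfl⟩
    refine ⟨a * b, s * t, S.mul_mem hs ht, ?_⟩
    push_cast
    field_simp
  neg_mem' := by
    rintro x ⟨a, s, hs, rfl⟩
    exact ⟨-a, s, hs, by push_cast; ring⟩

/-- The "inverse" `{x ∈ F : xS ⊆ A}` of a subset `S` of a field `F`, relative to
a subring `A` of `F`. -/
def dualSet {F : Type*} [Field F] (A : Subring F) (S : Set F) : Set F :=
  {x | ∀ y ∈ S, x * y ∈ A}

/-- An ideal of a subring of `F`, viewed as a subset of `F`. -/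
def idealSet {F : Type*} [Field F] (A : Subring F) (I : Ideal A) : Set F :=
  (fun a : A => (a : F)) '' (I : Set A)

/-- The `v`-closure (divisorial closure) of a subset of `F` relative to a subring `A`. -/
def vSet {F : Type*} [Field F] (A : Subring F) (S : Set F) : Set F :=
  dualSet A (dualSet A S)

/-- The `t`-closure of an ideal of a subring `A` of `F`, as a subset of `F`. -/
def tSet {F : Type*} [Field F] (A : Subring F) (I : Ideal A) : Set F :=
  {x | ∃ J : Ideal A, J ≤ I ∧ J.FG ∧ J ≠ ⊥ ∧ x ∈ vSet A (idealSet A J)}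

theorem primeCompl_ne_zero {R : Type*} [CommRing R] [Nontrivial R] (P : Ideal R) [P.IsPrime] :
    ∀ s ∈ P.primeCompl, s ≠ (0 : R) := by
  intro s hs h0
  exact hs (by rw [h0]; exact P.zero_mem)

open Pointwise in
/-- The product ideal `I·Int^R(E,D)` inside `K(X)`: the additive subgroup generated by
products `x·φ` with `x ∈ I` and `φ ∈ Int^R(E,D)`. -/
def prodSet {K : Type*} [Field K] (I : Set K) (E : Set K) (D : Subring K) : Set (RatFunc K) :=
  (AddSubgroup.closure
    ((algebraMap K (RatFunc K) '' I) * (IntR E D : Set (RatFunc K))) : Set (RatFunc K))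

/-!
Since `Int^R(E,D)` contains `1`, an element `φ` of `K(X)` multiplies `I·Int^R(E,D)` into
`Int^R(E,D)` iff it does so with the constants `x ∈ I`, i.e. iff `φ·x` is `D`-valued on `E`
for every `x ∈ I`. One nonzero `x ∈ I` forces `φ` to have no pole on `E`, and then this says
`φ(E) ⊆ I⁻¹`. For the `v`-closure, the same computation applied to `I⁻¹` (nonzero because `I`
is fractional) gives the dual of `Int^R(E, I⁻¹)`: its constants already cut it down to
`Int^R(E, I_v)`, and conversely `Int^R(E, I_v) · Int^R(E, I⁻¹) ⊆ Int^R(E,D)` pointwise.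
-/

section IntRDual

open Pointwise

theorem eval_denom_algebraMap_ne_zero (c e : K) :
    (algebraMap K (RatFunc K) c).denom.eval e ≠ 0 := by
  simp

theorem eval_denom_ne_zero_of_mul_algebraMap {φ : RatFunc K} {x e : K} (hx : x ≠ 0)
    (h : (φ * algebraMap K (RatFunc K) x).denom.eval e ≠ 0) : φ.denom.eval e ≠ 0 := by
  have hφ : φ = algebraMap K (RatFunc K) x⁻¹ * (φ * algebraMap K (RatFunc K) x) := by
    rw [mul_left_comm, ← map_mul, inv_mul_cancel₀ hx, map_one, mul_one]
  have hdvd := RatFunc.denom_mul_dvd (algebraMap K (RatFunc K) x⁻¹) (φ * algebraMap K (RatFunc K) x)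
  rw [← hφ] at hdvd
  exact denom_eval_ne_zero_of_dvd hdvd (eval_denom_algebraMap_ne_zero _ _) h

theorem rfEval_mul_algebraMap {φ : RatFunc K} {x e : K} (hφ : φ.denom.eval e ≠ 0) :
    rfEval e (φ * algebraMap K (RatFunc K) x) = rfEval e φ * x := by
  rw [rfEval_mul hφ (eval_denom_algebraMap_ne_zero _ _), rfEval_const]

theorem MapsInto.mono {E S T : Set K} {φ : RatFunc K} (hφ : MapsInto E S φ) (hST : S ⊆ T) :
    MapsInto E T φ :=
  fun e he => ⟨(hφ e he).1, hST (hφ e he).2⟩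

theorem MapsInto.mul {E S T : Set K} {φ ψ : RatFunc K} (hφ : MapsInto E S φ)
    (hψ : MapsInto E T ψ) : MapsInto E (S * T) (φ * ψ) := by
  intro e he
  obtain ⟨hφd, hφv⟩ := hφ e he
  obtain ⟨hψd, hψv⟩ := hψ e he
  refine ⟨denom_eval_ne_zero_of_dvd (RatFunc.denom_mul_dvd φ ψ) hφd hψd, ?_⟩
  rw [rfEval_mul hφd hψd]
  exact Set.mul_mem_mul hφv hψv

theorem mapsInto_algebraMap {E T : Set K} {c : K} (hc : c ∈ T) :
    MapsInto E T (algebraMap K (RatFunc K) c) :=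
  fun e _ => ⟨eval_denom_algebraMap_ne_zero c e, by rwa [rfEval_const]⟩

theorem dualSet_anti {F : Type*} [Field F] (A : Subring F) {S T : Set F} (hST : S ⊆ T) :
    dualSet A T ⊆ dualSet A S :=
  fun _ hx y hy => hx y (hST hy)

theorem dualSet_addSubgroupClosure {F : Type*} [Field F] (A : Subring F) (S : Set F) :
    dualSet A (AddSubgroup.closure S : Set F) = dualSet A S := by
  refine (dualSet_anti A AddSubgroup.subset_closure).antisymm fun x hx y hy => ?_
  exact (AddSubgroup.closure_le (A.toAddSubgroup.comap (AddMonoidHom.mulLeft x))).mpr hx hy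

theorem dualSet_mul_subring {F : Type*} [Field F] (A : Subring F) (S : Set F) :
    dualSet A (S * A) = dualSet A S := by
  refine (dualSet_anti A (Set.subset_mul_left S A.one_mem)).antisymm ?_
  rintro x hx _ ⟨s, hs, a, ha, rfl⟩
  rw [← mul_assoc]
  exact A.mul_mem (hx s hs) ha

theorem dualSet_intR_image_algebraMap (D : Subring K) (E I : Set K)
    (hne : ∃ x ∈ I, x ≠ 0) :
    dualSet (IntR E D) (algebraMap K (RatFunc K) '' I) =
      {φ : RatFunc K | MapsInto E (dualSet D I) φ} := by
  ext φ
  constructor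
  · intro hφ e he
    obtain ⟨x, hxI, hx0⟩ := hne
    have hden := eval_denom_ne_zero_of_mul_algebraMap hx0 (hφ _ ⟨x, hxI, rfl⟩ e he).1
    refine ⟨hden, fun y hy => ?_⟩
    rw [← rfEval_mul_algebraMap hden]
    exact (hφ _ ⟨y, hy, rfl⟩ e he).2
  · rintro hφ _ ⟨y, hy, rfl⟩
    exact (hφ.mul (mapsInto_algebraMap (Set.mem_singleton y))).mono
      (Set.mul_subset_iff.mpr fun a ha _ hb => hb ▸ ha y hy)

theorem dualSet_intR_prodSet (D : Subring K) (E I : Set K) (hne : ∃ x ∈ I, x ≠ 0) :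
    dualSet (IntR E D) (prodSet I E D) = {φ : RatFunc K | MapsInto E (dualSet D I) φ} := by
  rw [prodSet, dualSet_addSubgroupClosure, dualSet_mul_subring,
    dualSet_intR_image_algebraMap D E I hne]

theorem dualSet_intR_mapsInto (D : Subring K) (E J : Set K) (hne : ∃ x ∈ J, x ≠ 0) :
    dualSet (IntR E D) {ψ : RatFunc K | MapsInto E J ψ} =
      {φ : RatFunc K | MapsInto E (dualSet D J) φ} := by
  refine subset_antisymm ?_ fun φ hφ ψ hψ => ?_
  · rw [← dualSet_intR_image_algebraMap D E J hne]
    exact dualSet_anti _ (Set.image_subset_iff.mpr fun c hc => mapsInto_algebraMap hc)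
  · exact (hφ.mul hψ).mono (Set.mul_subset_iff.mpr fun a ha b hb => ha b hb)

end IntRDual

theorem inv_of_extension_eq_intR_inv_general {K : Type*} [Field K] (D : Subring K) (E : Set K)
    (I : Set K) (hne : ∃ x ∈ I, x ≠ (0 : K))
    (hfrac : ∃ d ∈ D, d ≠ (0 : K) ∧ ∀ x ∈ I, d * x ∈ D) :
    dualSet (IntR E D) (prodSet I E D) = {φ : RatFunc K | MapsInto E (dualSet D I) φ} ∧
    vSet (IntR E D) (prodSet I E D) = {φ : RatFunc K | MapsInto E (vSet D I) φ} := by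
  have hdual := dualSet_intR_prodSet D E I hne
  obtain ⟨d, -, hd0, hdI⟩ := hfrac
  have hne_dual : ∃ x ∈ dualSet D I, x ≠ 0 := ⟨d, hdI, hd0⟩
  refine ⟨hdual, ?_⟩
  rw [vSet, hdual, dualSet_intR_mapsInto D E _ hne_dual, vSet]

/-- for a nonzero fractional ideal `I` of `D`,
`(I·Int^R(E,D))⁻¹ = Int^R(E, I⁻¹)`; consequently `(I·Int^R(E,D))_v = Int^R(E, I_v)`. -/
theorem inv_of_extension_eq_intR_inv {K : Type*} [Field K] (D : Subring K) (E : Set K)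
    (hFrac : IsQuotField D) (hEne : E.Nonempty) (I : Set K)
    (h0 : (0 : K) ∈ I) (hadd : ∀ x ∈ I, ∀ y ∈ I, x + y ∈ I)
    (hsmul : ∀ d ∈ D, ∀ x ∈ I, d * x ∈ I)
    (hne : ∃ x ∈ I, x ≠ (0 : K))
    (hfrac : ∃ d ∈ D, d ≠ (0 : K) ∧ ∀ x ∈ I, d * x ∈ D) :
    dualSet (IntR E D) (prodSet I E D) = {φ : RatFunc K | MapsInto E (dualSet D I) φ} ∧
    vSet (IntR E D) (prodSet I E D) = {φ : RatFunc K | MapsInto E (vSet D I) φ} :=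
  inv_of_extension_eq_intR_inv_general D E I hne hfrac
end

section
/- Let D be an integral domain with quotient field K and E ⊆ K nonempty. Then Int^R(E,D) is seminormal if and only if D is seminormal, where a domain R with quotient field F is seminormal if for all α ∈ F, α² ∈ R and α³ ∈ R imply α ∈ R. -/
open Polynomial

variable {K : Type*} [Field K]

/-! Constant functions show that `D` inherits seminormality from `Int^R(E,D)`. Conversely, if
`φ²` and `φ³` are `D`-valued on `E`, then `φ` has no pole on `E`, since `denom φ ^ 2` divides
`denom (φ ^ 2)`; hence `φ(e)² = φ²(e)` and `φ(e)³ = φ³(e)` lie in `D`, and so does `φ(e)`. -/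

theorem RatFunc.denom_pow_dvd_denom_pow (φ : RatFunc K) (n : ℕ) :
    φ.denom ^ n ∣ (φ ^ n).denom := by
  have hnum : (φ ^ n).num * φ.denom ^ n = φ.num ^ n * (φ ^ n).denom :=
    (RatFunc.num_mul_eq_mul_denom_iff (pow_ne_zero n φ.denom_ne_zero)).mpr <| by
      rw [map_pow, map_pow, ← div_pow, RatFunc.num_div_denom]
  exact (RatFunc.isCoprime_num_denom φ).pow.symm.dvd_of_dvd_mul_left
    ⟨(φ ^ n).num, by rw [← hnum, mul_comm]⟩

theorem eval_denom_ne_zero_of_pow {φ : RatFunc K} {e : K} {n : ℕ} (hn : n ≠ 0)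
    (h : Polynomial.eval e (φ ^ n).denom ≠ 0) : Polynomial.eval e φ.denom ≠ 0 := by
  obtain ⟨c, hc⟩ := (dvd_pow_self φ.denom hn).trans (φ.denom_pow_dvd_denom_pow n)
  intro h0
  rw [hc, Polynomial.eval_mul, h0, zero_mul] at h
  exact h rfl

/- The functions defined at `e` form the subring `IntR {e} ⊤`, on which evaluation at `e`
is a ring homomorphism. -/
theorem rfEval_pow {φ : RatFunc K} {e : K} (h : Polynomial.eval e φ.denom ≠ 0) (n : ℕ) :
    rfEval e (φ ^ n) = rfEval e φ ^ n := by
  have hφ : φ ∈ IntR {e} (⊤ : Subring K) := by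
    rintro _ rfl
    exact ⟨h, trivial⟩
  exact congrArg Subtype.val (map_pow (evalHom {e} ⊤ e rfl) ⟨φ, hφ⟩ n)

theorem algebraMap_mem_IntR_iff {E : Set K} {D : Subring K} (hE : E.Nonempty) {α : K} :
    algebraMap K (RatFunc K) α ∈ IntR E D ↔ α ∈ D := by
  refine ⟨fun h => ?_, const_mem_IntR⟩
  obtain ⟨a, ha⟩ := hE
  simpa only [rfEval_const, SetLike.mem_coe] using (h a ha).2

theorem rfEval_pow_mem_of_pow_mem_IntR {E : Set K} {D : Subring K} {φ : RatFunc K} {n : ℕ}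
    (hn : n ≠ 0) (h : φ ^ n ∈ IntR E D) {e : K} (he : e ∈ E) :
    Polynomial.eval e φ.denom ≠ 0 ∧ rfEval e φ ^ n ∈ D := by
  obtain ⟨hden, hval⟩ := h e he
  have hφ := eval_denom_ne_zero_of_pow hn hden
  exact ⟨hφ, rfEval_pow hφ n ▸ hval⟩

theorem intR_seminormal_iff_general {K : Type*} [Field K] (D : Subring K) (E : Set K)
    (hEne : E.Nonempty) :
    (∀ φ : RatFunc K, φ ^ 2 ∈ IntR E D → φ ^ 3 ∈ IntR E D → φ ∈ IntR E D) ↔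
      (∀ α : K, α ^ 2 ∈ D → α ^ 3 ∈ D → α ∈ D) := by
  constructor
  · intro h α h2 h3
    rw [← algebraMap_mem_IntR_iff hEne] at h2 h3 ⊢
    rw [map_pow] at h2 h3
    exact h _ h2 h3
  · intro h φ h2 h3 e he
    obtain ⟨hφ, h2v⟩ := rfEval_pow_mem_of_pow_mem_IntR two_ne_zero h2 he
    exact ⟨hφ, h _ h2v (rfEval_pow_mem_of_pow_mem_IntR three_ne_zero h3 he).2⟩

/-- `Int^R(E,D)` is seminormal iff `D` is seminormal. -/
theorem intR_seminormal_iff {K : Type*} [Field K] (D : Subring K) (E : Set K)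
    (hFrac : IsQuotField D) (hEne : E.Nonempty) :
    (∀ φ : RatFunc K, φ ^ 2 ∈ IntR E D → φ ^ 3 ∈ IntR E D → φ ∈ IntR E D) ↔
      (∀ α : K, α ^ 2 ∈ D → α ^ 3 ∈ D → α ∈ D) :=
  intR_seminormal_iff_general D E hEne
end
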